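/- arXiv:2506.13617 — 5 statements merged into one kernel-verified Lean document; each statement's English description precedes it below -/
import Mathlib

section
/- Let S be a semigroup and I an ideal of S. Then S satisfies M_L if and only if both the semigroup I and the Rees quotient S/I satisfy M_L. -/
/-! Green's preorders and equivalences on an `(S,T)`-biact, given by the left
action `sm : S → A → A` and the right action `rm : A → T → A`. -/

section BiactDefs

variable {S T A : Type*}

/-- `a ≤_L b` iff `a = b` or `a = s · b` for some `s ∈ S`. -/
def leLAct (sm : S → A → A) (a b : A) : Prop :=
  a = b ∨ ∃ s, a = sm s b

/-- `a ≤_R b` iff `a = b` or `a = b · t` for some `t ∈ T`. -/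
def leRAct (rm : A → T → A) (a b : A) : Prop :=
  a = b ∨ ∃ t, a = rm b t

/-- `a ≤_J b` iff `a = b`, or `a = s · b`, or `a = b · t`, or `a = s · b · t`. -/
def leJAct (sm : S → A → A) (rm : A → T → A) (a b : A) : Prop :=
  a = b ∨ (∃ s, a = sm s b) ∨ (∃ t, a = rm b t) ∨ ∃ s t, a = rm (sm s b) t

/-- Green's relation `L` on a biact. -/
def eqvLAct (sm : S → A → A) (a b : A) : Prop :=
  leLAct sm a b ∧ leLAct sm b a

/-- Green's relation `R` on a biact. -/
def eqvRAct (rm : A → T → A) (a b : A) : Prop :=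
  leRAct rm a b ∧ leRAct rm b a

/-- Green's relation `J` on a biact. -/
def eqvJAct (sm : S → A → A) (rm : A → T → A) (a b : A) : Prop :=
  leJAct sm rm a b ∧ leJAct sm rm b a

/-- `(sm, rm)` constitutes an `(S,T)`-biact structure on `A`. -/
def IsBiact [Semigroup S] [Semigroup T] (sm : S → A → A) (rm : A → T → A) : Prop :=
  (∀ (s s' : S) (a : A), sm s (sm s' a) = sm (s * s') a) ∧
  (∀ (a : A) (t t' : T), rm (rm a t) t' = rm a (t * t')) ∧
  (∀ (s : S) (a : A) (t : T), rm (sm s a) t = sm s (rm a t))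

/-- The minimal condition `M_L`: every descending `≤_L`-chain eventually stabilises. -/
def MinLAct (sm : S → A → A) : Prop :=
  ∀ f : ℕ → A, (∀ n, leLAct sm (f (n + 1)) (f n)) →
    ∃ m, ∀ n ≥ m, eqvLAct sm (f m) (f n)

/-- The minimal condition `M_R`. -/
def MinRAct (rm : A → T → A) : Prop :=
  ∀ f : ℕ → A, (∀ n, leRAct rm (f (n + 1)) (f n)) →
    ∃ m, ∀ n ≥ m, eqvRAct rm (f m) (f n)

/-- The minimal condition `M_J`. -/
def MinJAct (sm : S → A → A) (rm : A → T → A) : Prop :=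
  ∀ f : ℕ → A, (∀ n, leJAct sm rm (f (n + 1)) (f n)) →
    ∃ m, ∀ n ≥ m, eqvJAct sm rm (f m) (f n)

/-- A biact is left stable if `(s · a) J a` implies `(s · a) L a`. -/
def LeftStableAct (sm : S → A → A) (rm : A → T → A) : Prop :=
  ∀ (a : A) (s : S), eqvJAct sm rm (sm s a) a → eqvLAct sm (sm s a) a

/-- A biact is right stable if `(a · t) J a` implies `(a · t) R a`. -/
def RightStableAct (sm : S → A → A) (rm : A → T → A) : Prop :=
  ∀ (a : A) (t : T), eqvJAct sm rm (rm a t) a → eqvRAct rm (rm a t) a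

/-- A biact is stable if it is left and right stable. -/
def StableAct (sm : S → A → A) (rm : A → T → A) : Prop :=
  LeftStableAct sm rm ∧ RightStableAct sm rm

/-- A biact is `L`-periodic if for all `s, a` there is `n ≥ 1` with `(sⁿ · a) L (sⁿ⁺¹ · a)`. -/
def LPeriodicAct (sm : S → A → A) : Prop :=
  ∀ (s : S) (a : A), ∃ n : ℕ, 1 ≤ n ∧ eqvLAct sm ((sm s)^[n] a) ((sm s)^[n + 1] a)

/-- A biact is `R`-periodic if for all `t, a` there is `n ≥ 1` with `(a · tⁿ) R (a · tⁿ⁺¹)`. -/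
def RPeriodicAct (rm : A → T → A) : Prop :=
  ∀ (t : T) (a : A), ∃ n : ℕ, 1 ≤ n ∧
    eqvRAct rm ((fun x => rm x t)^[n] a) ((fun x => rm x t)^[n + 1] a)

end BiactDefs

/-! Relative Green's preorders on a semigroup `S`, with multipliers taken from a
subset `W ⊆ S`; taking `W = Set.univ` recovers the usual Green's preorders on `S`,
taking `W = T` for a subsemigroup `T` gives the relative (`T`-biact `_T S_T`)
relations, and restricting the carrier to `T` as well gives the relations of the
semigroup `T` itself. -/

section RelDefs

variable {S : Type*} [Semigroup S]

/-- `a ≤_L b` with multiplier in `W`. -/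
def leLW (W : Set S) (a b : S) : Prop := a = b ∨ ∃ t ∈ W, a = t * b

/-- `a ≤_R b` with multiplier in `W`. -/
def leRW (W : Set S) (a b : S) : Prop := a = b ∨ ∃ t ∈ W, a = b * t

/-- `a ≤_J b` with multipliers in `W`. -/
def leJW (W : Set S) (a b : S) : Prop :=
  a = b ∨ (∃ s ∈ W, a = s * b) ∨ (∃ t ∈ W, a = b * t) ∨ ∃ s ∈ W, ∃ t ∈ W, a = s * b * t

/-- Green's `L`-relation with multipliers in `W`. -/
def eqvLW (W : Set S) (a b : S) : Prop := leLW W a b ∧ leLW W b a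

/-- Green's `R`-relation with multipliers in `W`. -/
def eqvRW (W : Set S) (a b : S) : Prop := leRW W a b ∧ leRW W b a

/-- Green's `J`-relation with multipliers in `W`. -/
def eqvJW (W : Set S) (a b : S) : Prop := leJW W a b ∧ leJW W b a

/-- `M_L` for chains lying in the carrier `C`, with multipliers in `W`. -/
def MinLOn (W C : Set S) : Prop :=
  ∀ f : ℕ → S, (∀ n, f n ∈ C) → (∀ n, leLW W (f (n + 1)) (f n)) →
    ∃ m, ∀ n ≥ m, eqvLW W (f m) (f n)

/-- `M_R` for chains lying in the carrier `C`, with multipliers in `W`. -/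
def MinROn (W C : Set S) : Prop :=
  ∀ f : ℕ → S, (∀ n, f n ∈ C) → (∀ n, leRW W (f (n + 1)) (f n)) →
    ∃ m, ∀ n ≥ m, eqvRW W (f m) (f n)

/-- `M_J` for chains lying in the carrier `C`, with multipliers in `W`. -/
def MinJOn (W C : Set S) : Prop :=
  ∀ f : ℕ → S, (∀ n, f n ∈ C) → (∀ n, leJW W (f (n + 1)) (f n)) →
    ∃ m, ∀ n ≥ m, eqvJW W (f m) (f n)

/-- Left stability for elements of `C`, with multipliers in `W`. -/
def LeftStableOn (W C : Set S) : Prop :=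
  ∀ a ∈ C, ∀ s ∈ W, eqvJW W (s * a) a → eqvLW W (s * a) a

/-- Right stability for elements of `C`, with multipliers in `W`. -/
def RightStableOn (W C : Set S) : Prop :=
  ∀ a ∈ C, ∀ t ∈ W, eqvJW W (a * t) a → eqvRW W (a * t) a

/-- Stability (both left and right). -/
def StableOn (W C : Set S) : Prop := LeftStableOn W C ∧ RightStableOn W C

end RelDefs

section ReesQuotient

open Classical

/-- The multiplication of the Rees quotient `S/I`, on `(S \ I) ⊔ {0}` (with `0 = none`). -/
noncomputable def reesMul {S : Type*} [Mul S] (I : Set S) :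
    Option {a : S // a ∉ I} → Option {a : S // a ∉ I} → Option {a : S // a ∉ I} :=
  fun x y => x.bind fun a => y.bind fun b =>
    if h : a.1 * b.1 ∈ I then none else some ⟨a.1 * b.1, h⟩

end ReesQuotient


section AuxLemmas

variable {S : Type*} [Semigroup S]

lemma leLW_mono' {W W' : Set S} (h : W ⊆ W') {a b : S} (hab : leLW W a b) : leLW W' a b :=
  hab.imp id (fun ⟨s, hs, he⟩ => ⟨s, h hs, he⟩)

lemma leLW_trans' {W : Set S} (hW : ∀ a ∈ W, ∀ b ∈ W, a * b ∈ W) {a b c : S}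
    (h1 : leLW W a b) (h2 : leLW W b c) : leLW W a c := by
  rcases h1 with rfl | ⟨s, hs, rfl⟩
  · exact h2
  · rcases h2 with rfl | ⟨t, ht, rfl⟩
    · exact Or.inr ⟨s, hs, rfl⟩
    · exact Or.inr ⟨s * t, hW s hs t ht, (mul_assoc s t c).symm⟩

lemma leLW_descend' {W : Set S} (hW : ∀ a ∈ W, ∀ b ∈ W, a * b ∈ W) {f : ℕ → S}
    (hf : ∀ n, leLW W (f (n+1)) (f n)) :
    ∀ m n, m ≤ n → leLW W (f n) (f m) := by
  intro m n hmn
  induction n, hmn using Nat.le_induction with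
  | base => exact Or.inl rfl
  | succ n hmn ih => exact leLW_trans' hW (hf n) ih

lemma reesMul_none_right' {I : Set S} (x : Option {a : S // a ∉ I}) :
    reesMul I x none = none := by cases x <;> rfl

open Classical in
lemma reesMul_some_some' {I : Set S} (s b : {a : S // a ∉ I}) :
    reesMul I (some s) (some b) =
      if h : s.1 * b.1 ∈ I then none else some ⟨s.1 * b.1, h⟩ := rfl

end AuxLemmas

/-- A semigroup `S` satisfies `M_L` if and only if both an ideal `I` (as a semigroup)
and the Rees quotient `S/I` satisfy `M_L`. -/
theorem minL_iff_ideal_and_reesQuotient {S : Type*} [Semigroup S]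
    (I : Set S) (hI0 : I.Nonempty)
    (hIl : ∀ (s : S), ∀ a ∈ I, s * a ∈ I) (hIr : ∀ (s : S), ∀ a ∈ I, a * s ∈ I) :
    MinLOn (Set.univ : Set S) Set.univ ↔ (MinLOn I I ∧ MinLAct (reesMul I)) := by
  have huniv : ∀ a ∈ (Set.univ : Set S), ∀ b ∈ (Set.univ : Set S), a * b ∈ (Set.univ : Set S) :=
    fun _ _ _ _ => Set.mem_univ _
  have hWI : ∀ a ∈ I, ∀ b ∈ I, a * b ∈ I := fun a _ b hb => hIl a b hb
  constructor
  · intro hS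
    constructor
    · -- MinLOn I I
      intro f hfI hf
      obtain ⟨m, hm⟩ := hS f (fun _ => Set.mem_univ _)
        (fun n => leLW_mono' (Set.subset_univ I) (hf n))
      refine ⟨m, fun n hn => ⟨?_, leLW_descend' hWI hf m n hn⟩⟩
      rcases (hm n hn).1 with h | ⟨s, -, hs⟩
      · exact Or.inl h
      rcases leLW_descend' hWI hf m n hn with h' | ⟨w, hw, hw'⟩
      · exact Or.inl h'.symm
      · exact Or.inr ⟨s * (w * s), hIl s _ (hIr s w hw), by
          rw [mul_assoc, mul_assoc, ← hs, ← hw']; exact hs⟩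
    · -- MinLAct (reesMul I)
      intro g hg
      by_cases hne : ∃ k, g k = none
      · obtain ⟨k, hk⟩ := hne
        have hall : ∀ n, k ≤ n → g n = none := by
          intro n hn
          induction n, hn using Nat.le_induction with
          | base => exact hk
          | succ n hn ih =>
            rcases hg n with h | ⟨x, hx⟩
            · rw [h, ih]
            · rw [hx, ih, reesMul_none_right']
        exact ⟨k, fun n hn =>
          ⟨Or.inl (hk.trans (hall n hn).symm), Or.inl ((hall n hn).trans hk.symm)⟩⟩
      · push_neg at hne
        have hsome : ∀ n, ∃ a : {x : S // x ∉ I}, g n = some a := by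
          intro n
          cases h : g n with
          | none => exact absurd h (hne n)
          | some a => exact ⟨a, rfl⟩
        choose a ha using hsome
        have hchain : ∀ n, leLW (Set.univ : Set S) ((a (n+1)).1) ((a n).1) := by
          intro n
          rcases hg n with h | ⟨x, hx⟩
          · rw [ha, ha] at h
            exact Or.inl (congrArg Subtype.val (Option.some_injective _ h))
          · rw [ha, ha] at hx
            cases x with
            | none => exact absurd hx (Option.some_ne_none _)
            | some s =>
              rw [reesMul_some_some'] at hx
              by_cases hin : s.1 * (a n).1 ∈ I
              · rw [dif_pos hin] at hx
                exact absurd hx (Option.some_ne_none _)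
              · rw [dif_neg hin] at hx
                exact Or.inr ⟨s.1, Set.mem_univ _,
                  congrArg Subtype.val (Option.some_injective _ hx)⟩
        obtain ⟨m, hm⟩ := hS (fun n => (a n).1) (fun _ => Set.mem_univ _) hchain
        have key : ∀ p q : ℕ, leLW (Set.univ : Set S) ((a p).1) ((a q).1) →
            leLAct (reesMul I) (g p) (g q) := by
          intro p q h
          rcases h with h | ⟨s, -, hs⟩
          · exact Or.inl (by rw [ha p, ha q]; exact congrArg some (Subtype.ext h))
          · have hsI : s * (a q).1 ∉ I := hs ▸ (a p).2
            have hs' : s ∉ I := fun hmem => hsI (hIr ((a q).1) s hmem)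
            refine Or.inr ⟨some ⟨s, hs'⟩, ?_⟩
            rw [ha p, ha q, reesMul_some_some', dif_neg hsI]
            exact congrArg some (Subtype.ext hs)
        exact ⟨m, fun n hn => ⟨key m n (hm n hn).1, key n m (hm n hn).2⟩⟩
  · rintro ⟨hII, hR⟩ f - hf
    by_cases hcase : ∀ k, ∃ n, k ≤ n ∧ ∃ w ∈ I, f n = w * f k
    · -- Case 1: the chain keeps re-entering I with multipliers from I
      have aux : ∀ k, ∃ n, k < n ∧ ∃ w ∈ I, f n = w * f k := by
        intro k
        obtain ⟨n, hn, w, hwI, hw⟩ := hcase (k + 1)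
        refine ⟨n, Nat.lt_of_lt_of_le (Nat.lt_succ_self k) hn, ?_⟩
        rcases hf k with h | ⟨s, -, hs⟩
        · exact ⟨w, hwI, by rw [hw, h]⟩
        · exact ⟨w * s, hIr s w hwI, by rw [hw, hs, mul_assoc]⟩
      choose nxt hlt w hwI hw using aux
      set idx : ℕ → ℕ := fun j => Nat.rec (nxt 0) (fun _ p => nxt p) j with hidxdef
      have hidx0 : idx 0 = nxt 0 := rfl
      have hidxs : ∀ j, idx (j + 1) = nxt (idx j) := fun j => rfl
      have hmem : ∀ j, f (idx j) ∈ I := by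
        intro j
        cases j with
        | zero => rw [hidx0, hw 0]; exact hIr (f 0) (w 0) (hwI 0)
        | succ j => rw [hidxs, hw (idx j)]; exact hIr (f (idx j)) (w (idx j)) (hwI (idx j))
      have hstep : ∀ j, leLW I (f (idx (j + 1))) (f (idx j)) := by
        intro j
        rw [hidxs]
        exact Or.inr ⟨w (idx j), hwI (idx j), hw (idx j)⟩
      have hidx_ge : ∀ j, j ≤ idx j := by
        intro j
        induction j with
        | zero => exact Nat.zero_le _
        | succ j ih =>
          rw [hidxs]
          exact Nat.succ_le_of_lt (Nat.lt_of_le_of_lt ih (hlt (idx j)))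
      obtain ⟨mI, hmI⟩ := hII (fun j => f (idx j)) hmem hstep
      refine ⟨idx mI, fun n hn => ⟨?_, leLW_descend' huniv hf (idx mI) n hn⟩⟩
      have h1 : leLW I (f (idx mI)) (f (idx (max mI n))) := (hmI (max mI n) (le_max_left _ _)).1
      have h2 : leLW (Set.univ : Set S) (f (idx (max mI n))) (f n) :=
        leLW_descend' huniv hf n _ (le_trans (le_max_right mI n) (hidx_ge _))
      exact leLW_trans' huniv (leLW_mono' (Set.subset_univ I) h1) h2
    · -- Case 2: after index k, the chain never lies I-below f k
      push_neg at hcase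
      obtain ⟨k, hk⟩ := hcase
      by_cases heq : ∀ n, k ≤ n → f n = f k
      · exact ⟨k, fun n hn => ⟨Or.inl (heq n hn).symm, Or.inl (heq n hn)⟩⟩
      · push_neg at heq
        obtain ⟨n1, hn1k, hne1⟩ := heq
        obtain ⟨t1, -, ht1⟩ := (leLW_descend' huniv hf k n1 hn1k).resolve_left hne1
        have hst0 : ∀ n, ∃ c : Option S, (c = none ∧ f (n + 1) = f n) ∨
            ∃ s, c = some s ∧ f (n + 1) = s * f n := by
          intro n
          rcases hf n with h | ⟨s, -, hs⟩
          · exact ⟨none, Or.inl ⟨rfl, h⟩⟩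
          · exact ⟨some s, Or.inr ⟨s, rfl, hs⟩⟩
        choose st hst using hst0
        set t : ℕ → S :=
          fun j => Nat.rec t1 (fun j tj => (st (n1 + j)).elim tj (fun s => s * tj)) j with htdef
        have hts : ∀ j, t (j + 1) = (st (n1 + j)).elim (t j) (fun s => s * t j) := fun j => rfl
        have hinv : ∀ j, f (n1 + j) = t j * f k := by
          intro j
          induction j with
          | zero => exact ht1
          | succ j ih =>
            rcases hst (n1 + j) with ⟨hc, he⟩ | ⟨s, hc, he⟩
            · rw [hts, hc, Option.elim_none]
              exact he.trans ih
            · rw [hts, hc, Option.elim_some, mul_assoc, ← ih]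
              exact he
        have htI : ∀ j, t j ∉ I := by
          intro j hmem
          exact hk (n1 + j) (le_trans hn1k (Nat.le_add_right _ _)) (t j) hmem (hinv j)
        have hgstep : ∀ j, leLAct (reesMul I)
            ((fun j => (some ⟨t j, htI j⟩ : Option {a : S // a ∉ I})) (j + 1))
            ((fun j => (some ⟨t j, htI j⟩ : Option {a : S // a ∉ I})) j) := by
          intro j
          rcases hst (n1 + j) with ⟨hc, -⟩ | ⟨s, hc, -⟩
          · have hteq : t (j + 1) = t j := by rw [hts, hc, Option.elim_none]
            exact Or.inl (congrArg some (Subtype.ext hteq))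
          · have hts' : t (j + 1) = s * t j := by rw [hts, hc, Option.elim_some]
            have hsI : s * t j ∉ I := by rw [← hts']; exact htI (j + 1)
            have hs' : s ∉ I := fun hmem => hsI (hIr (t j) s hmem)
            refine Or.inr ⟨some ⟨s, hs'⟩, ?_⟩
            rw [reesMul_some_some', dif_neg hsI]
            exact congrArg some (Subtype.ext hts')
        obtain ⟨m2, hm2⟩ := hR (fun j => (some ⟨t j, htI j⟩ : Option {a : S // a ∉ I})) hgstep
        refine ⟨n1 + m2, fun n hn => ⟨?_, leLW_descend' huniv hf (n1 + m2) n hn⟩⟩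
        have hn1n : n1 ≤ n := le_trans (Nat.le_add_right _ _) hn
        have hnj : n = n1 + (n - n1) := by omega
        have hjm : m2 ≤ n - n1 := by omega
        rcases (hm2 (n - n1) hjm).1 with h | ⟨x, hx⟩
        · have hteq : t m2 = t (n - n1) := congrArg Subtype.val (Option.some_injective _ h)
          exact Or.inl (by rw [hnj, hinv m2, hinv (n - n1), hteq])
        · cases x with
          | none => exact absurd hx (Option.some_ne_none _)
          | some s =>
            rw [reesMul_some_some'] at hx
            by_cases hin : s.1 * t (n - n1) ∈ I
            · rw [dif_pos hin] at hx
              exact absurd hx (Option.some_ne_none _)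
            · rw [dif_neg hin] at hx
              have hteq : t m2 = s.1 * t (n - n1) :=
                congrArg Subtype.val (Option.some_injective _ hx)
              exact Or.inr ⟨s.1, Set.mem_univ _,
                by rw [hnj, hinv m2, hinv (n - n1), hteq, mul_assoc]⟩
end

section
/- Let S and T be semigroups, A an (S,T)-biact, and B a subact of A. Then A is left stable if and only if both B and the Rees quotient A/B are left stable; likewise A is stable if and only if both B and A/B are stable. -/
/-- `B` is a subact of the biact `A`: a nonempty subset closed under both actions. -/
def IsSubact {S T A : Type*} (sm : S → A → A) (rm : A → T → A) (B : Set A) : Prop :=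
  B.Nonempty ∧ (∀ (s : S), ∀ b ∈ B, sm s b ∈ B) ∧ (∀ (t : T), ∀ b ∈ B, rm b t ∈ B)

section ReesQuotient

open Classical

/-- The left action of the Rees quotient `A/B`, on `(A \ B) ⊔ {0}` (with `0 = none`). -/
noncomputable def reesSm {S A : Type*} (sm : S → A → A) (B : Set A) (s : S) :
    Option {a : A // a ∉ B} → Option {a : A // a ∉ B} :=
  fun x => x.bind fun a => if h : sm s a.1 ∈ B then none else some ⟨sm s a.1, h⟩

/-- The right action of the Rees quotient `A/B`, on `(A \ B) ⊔ {0}` (with `0 = none`). -/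
noncomputable def reesRm {T A : Type*} (rm : A → T → A) (B : Set A) :
    Option {a : A // a ∉ B} → T → Option {a : A // a ∉ B} :=
  fun x t => x.bind fun a => if h : rm a.1 t ∈ B then none else some ⟨rm a.1 t, h⟩

end ReesQuotient


section AuxProofs

open Classical

variable {S T A : Type*} {sm : S → A → A} {rm : A → T → A} {B : Set A}

lemma reesSm_some (s : S) {a : A} (ha : a ∉ B) :
    reesSm sm B s (some ⟨a, ha⟩) =
      if h : sm s a ∈ B then none else some ⟨sm s a, h⟩ := rfl

lemma reesRm_some (t : T) {a : A} (ha : a ∉ B) :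
    reesRm rm B (some ⟨a, ha⟩) t =
      if h : rm a t ∈ B then none else some ⟨rm a t, h⟩ := rfl

lemma reesSm_none (s : S) : reesSm sm B s none = none := rfl

lemma reesRm_none (t : T) : reesRm rm (B := B) none t = none := rfl

lemma leL_rees_iff {a b : A} (ha : a ∉ B) (hb : b ∉ B) :
    leLAct (reesSm sm B) (some ⟨a, ha⟩ : Option {x : A // x ∉ B}) (some ⟨b, hb⟩) ↔
      leLAct sm a b := by
  constructor
  · rintro (h | ⟨s, h⟩)
    · injection h with h; exact Or.inl (congrArg Subtype.val h)
    · rw [reesSm_some] at h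
      by_cases h1 : sm s b ∈ B
      · rw [dif_pos h1] at h; exact absurd h (by simp)
      · rw [dif_neg h1] at h
        injection h with h
        exact Or.inr ⟨s, congrArg Subtype.val h⟩
  · rintro (h | ⟨s, h⟩)
    · subst h; exact Or.inl rfl
    · refine Or.inr ⟨s, ?_⟩
      rw [reesSm_some, dif_neg (h ▸ ha)]
      exact congrArg some (Subtype.ext h)

lemma leR_rees_iff (hB : IsSubact sm rm B) {a b : A} (ha : a ∉ B) (hb : b ∉ B) :
    leRAct (reesRm rm B) (some ⟨a, ha⟩ : Option {x : A // x ∉ B}) (some ⟨b, hb⟩) ↔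
      leRAct rm a b := by
  constructor
  · rintro (h | ⟨t, h⟩)
    · injection h with h; exact Or.inl (congrArg Subtype.val h)
    · rw [reesRm_some] at h
      by_cases h1 : rm b t ∈ B
      · rw [dif_pos h1] at h; exact absurd h (by simp)
      · rw [dif_neg h1] at h
        injection h with h
        exact Or.inr ⟨t, congrArg Subtype.val h⟩
  · rintro (h | ⟨t, h⟩)
    · subst h; exact Or.inl rfl
    · refine Or.inr ⟨t, ?_⟩
      rw [reesRm_some, dif_neg (h ▸ ha)]
      exact congrArg some (Subtype.ext h)

lemma leJ_rees_iff (hB : IsSubact sm rm B) {a b : A} (ha : a ∉ B) (hb : b ∉ B) :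
    leJAct (reesSm sm B) (reesRm rm B)
      (some ⟨a, ha⟩ : Option {x : A // x ∉ B}) (some ⟨b, hb⟩) ↔
      leJAct sm rm a b := by
  constructor
  · rintro (h | ⟨s, h⟩ | ⟨t, h⟩ | ⟨s, t, h⟩)
    · injection h with h; exact Or.inl (congrArg Subtype.val h)
    · rw [reesSm_some] at h
      by_cases h1 : sm s b ∈ B
      · rw [dif_pos h1] at h; exact absurd h (by simp)
      · rw [dif_neg h1] at h
        injection h with h
        exact Or.inr (Or.inl ⟨s, congrArg Subtype.val h⟩)
    · rw [reesRm_some] at h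
      by_cases h1 : rm b t ∈ B
      · rw [dif_pos h1] at h; exact absurd h (by simp)
      · rw [dif_neg h1] at h
        injection h with h
        exact Or.inr (Or.inr (Or.inl ⟨t, congrArg Subtype.val h⟩))
    · rw [reesSm_some] at h
      by_cases h1 : sm s b ∈ B
      · rw [dif_pos h1, reesRm_none] at h
        exact absurd h (by simp)
      · rw [dif_neg h1, reesRm_some] at h
        by_cases h2 : rm (sm s b) t ∈ B
        · rw [dif_pos h2] at h; exact absurd h (by simp)
        · rw [dif_neg h2] at h
          injection h with h
          exact Or.inr (Or.inr (Or.inr ⟨s, t, congrArg Subtype.val h⟩))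
  · rintro (h | ⟨s, h⟩ | ⟨t, h⟩ | ⟨s, t, h⟩)
    · subst h; exact Or.inl rfl
    · refine Or.inr (Or.inl ⟨s, ?_⟩)
      rw [reesSm_some, dif_neg (h ▸ ha)]
      exact congrArg some (Subtype.ext h)
    · refine Or.inr (Or.inr (Or.inl ⟨t, ?_⟩))
      rw [reesRm_some, dif_neg (h ▸ ha)]
      exact congrArg some (Subtype.ext h)
    · refine Or.inr (Or.inr (Or.inr ⟨s, t, ?_⟩))
      have h1 : sm s b ∉ B := fun hmem => (h ▸ ha) (hB.2.2 t _ hmem)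
      rw [reesSm_some, dif_neg h1, reesRm_some, dif_neg (h ▸ ha)]
      exact congrArg some (Subtype.ext h)

lemma leL_sub_iff (hB : IsSubact sm rm B) {a b : A} (ha : a ∈ B) (hb : b ∈ B) :
    leLAct (fun (s : S) (x : B) => (⟨sm s x.1, hB.2.1 s x.1 x.2⟩ : B))
      ⟨a, ha⟩ ⟨b, hb⟩ ↔ leLAct sm a b := by
  simp [leLAct, Subtype.ext_iff]

lemma leR_sub_iff (hB : IsSubact sm rm B) {a b : A} (ha : a ∈ B) (hb : b ∈ B) :
    leRAct (fun (x : B) (t : T) => (⟨rm x.1 t, hB.2.2 t x.1 x.2⟩ : B))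
      ⟨a, ha⟩ ⟨b, hb⟩ ↔ leRAct rm a b := by
  simp [leRAct, Subtype.ext_iff]

lemma leJ_sub_iff (hB : IsSubact sm rm B) {a b : A} (ha : a ∈ B) (hb : b ∈ B) :
    leJAct (fun (s : S) (x : B) => (⟨sm s x.1, hB.2.1 s x.1 x.2⟩ : B))
      (fun (x : B) (t : T) => (⟨rm x.1 t, hB.2.2 t x.1 x.2⟩ : B))
      ⟨a, ha⟩ ⟨b, hb⟩ ↔ leJAct sm rm a b := by
  simp [leJAct, Subtype.ext_iff]

lemma left_stable_iff (hB : IsSubact sm rm B) :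
    LeftStableAct sm rm ↔
      (LeftStableAct (fun (s : S) (b : B) => (⟨sm s b.1, hB.2.1 s b.1 b.2⟩ : B))
                     (fun (b : B) (t : T) => (⟨rm b.1 t, hB.2.2 t b.1 b.2⟩ : B)) ∧
       LeftStableAct (reesSm sm B) (reesRm rm B)) := by
  constructor
  · intro hA
    constructor
    · rintro ⟨a, ha⟩ s hJ
      have hJ' : eqvJAct sm rm (sm s a) a :=
        ⟨(leJ_sub_iff hB _ _).mp hJ.1, (leJ_sub_iff hB _ _).mp hJ.2⟩
      have hL := hA a s hJ'
      exact ⟨(leL_sub_iff hB _ _).mpr hL.1, (leL_sub_iff hB _ _).mpr hL.2⟩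
    · rintro (_ | ⟨a, ha⟩) s hJ
      · exact ⟨Or.inl rfl, Or.inl rfl⟩
      · by_cases hsa : sm s a ∈ B
        · rw [reesSm_some, dif_pos hsa] at hJ
          rcases hJ.2 with h | ⟨s', h⟩ | ⟨t, h⟩ | ⟨s', t, h⟩ <;>
            simp [reesSm, reesRm] at h
        · rw [reesSm_some, dif_neg hsa] at hJ ⊢
          have hJ' : eqvJAct sm rm (sm s a) a :=
            ⟨(leJ_rees_iff hB hsa ha).mp hJ.1, (leJ_rees_iff hB ha hsa).mp hJ.2⟩
          have hL := hA a s hJ'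
          exact ⟨(leL_rees_iff hsa ha).mpr hL.1, (leL_rees_iff ha hsa).mpr hL.2⟩
  · rintro ⟨hBst, hQst⟩ a s hJ
    by_cases haB : a ∈ B
    · have hsa : sm s a ∈ B := hB.2.1 s a haB
      have hJ' : eqvJAct (fun (s : S) (x : B) => (⟨sm s x.1, hB.2.1 s x.1 x.2⟩ : B))
          (fun (x : B) (t : T) => (⟨rm x.1 t, hB.2.2 t x.1 x.2⟩ : B))
          ⟨sm s a, hsa⟩ ⟨a, haB⟩ :=
        ⟨(leJ_sub_iff hB _ _).mpr hJ.1, (leJ_sub_iff hB _ _).mpr hJ.2⟩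
      have hL := hBst ⟨a, haB⟩ s hJ'
      exact ⟨(leL_sub_iff hB hsa haB).mp hL.1, (leL_sub_iff hB haB hsa).mp hL.2⟩
    · by_cases hsa : sm s a ∈ B
      · exfalso
        rcases hJ.2 with h | ⟨s', h⟩ | ⟨t, h⟩ | ⟨s', t, h⟩
        · exact haB (by rw [h]; exact hsa)
        · exact haB (by rw [h]; exact hB.2.1 _ _ hsa)
        · exact haB (by rw [h]; exact hB.2.2 _ _ hsa)
        · exact haB (by rw [h]; exact hB.2.2 _ _ (hB.2.1 _ _ hsa))
      · have hJ' : eqvJAct (reesSm sm B) (reesRm rm B)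
            (some ⟨sm s a, hsa⟩) (some ⟨a, haB⟩) :=
          ⟨(leJ_rees_iff hB hsa haB).mpr hJ.1, (leJ_rees_iff hB haB hsa).mpr hJ.2⟩
        have hJ'' : eqvJAct (reesSm sm B) (reesRm rm B)
            (reesSm sm B s (some ⟨a, haB⟩)) (some ⟨a, haB⟩) := by
          rwa [reesSm_some, dif_neg hsa]
        have hL := hQst (some ⟨a, haB⟩) s hJ''
        rw [reesSm_some, dif_neg hsa] at hL
        exact ⟨(leL_rees_iff hsa haB).mp hL.1, (leL_rees_iff haB hsa).mp hL.2⟩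

lemma right_stable_iff (hB : IsSubact sm rm B) :
    RightStableAct sm rm ↔
      (RightStableAct (fun (s : S) (b : B) => (⟨sm s b.1, hB.2.1 s b.1 b.2⟩ : B))
                      (fun (b : B) (t : T) => (⟨rm b.1 t, hB.2.2 t b.1 b.2⟩ : B)) ∧
       RightStableAct (reesSm sm B) (reesRm rm B)) := by
  constructor
  · intro hA
    constructor
    · rintro ⟨a, ha⟩ t hJ
      have hJ' : eqvJAct sm rm (rm a t) a :=
        ⟨(leJ_sub_iff hB _ _).mp hJ.1, (leJ_sub_iff hB _ _).mp hJ.2⟩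
      have hR := hA a t hJ'
      exact ⟨(leR_sub_iff hB _ _).mpr hR.1, (leR_sub_iff hB _ _).mpr hR.2⟩
    · rintro (_ | ⟨a, ha⟩) t hJ
      · exact ⟨Or.inl rfl, Or.inl rfl⟩
      · by_cases hat : rm a t ∈ B
        · rw [reesRm_some, dif_pos hat] at hJ
          rcases hJ.2 with h | ⟨s', h⟩ | ⟨t', h⟩ | ⟨s', t', h⟩ <;>
            simp [reesSm, reesRm] at h
        · rw [reesRm_some, dif_neg hat] at hJ ⊢
          have hJ' : eqvJAct sm rm (rm a t) a :=
            ⟨(leJ_rees_iff hB hat ha).mp hJ.1, (leJ_rees_iff hB ha hat).mp hJ.2⟩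
          have hR := hA a t hJ'
          exact ⟨(leR_rees_iff hB hat ha).mpr hR.1, (leR_rees_iff hB ha hat).mpr hR.2⟩
  · rintro ⟨hBst, hQst⟩ a t hJ
    by_cases haB : a ∈ B
    · have hat : rm a t ∈ B := hB.2.2 t a haB
      have hJ' : eqvJAct (fun (s : S) (x : B) => (⟨sm s x.1, hB.2.1 s x.1 x.2⟩ : B))
          (fun (x : B) (t : T) => (⟨rm x.1 t, hB.2.2 t x.1 x.2⟩ : B))
          ⟨rm a t, hat⟩ ⟨a, haB⟩ :=
        ⟨(leJ_sub_iff hB _ _).mpr hJ.1, (leJ_sub_iff hB _ _).mpr hJ.2⟩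
      have hR := hBst ⟨a, haB⟩ t hJ'
      exact ⟨(leR_sub_iff hB hat haB).mp hR.1, (leR_sub_iff hB haB hat).mp hR.2⟩
    · by_cases hat : rm a t ∈ B
      · exfalso
        rcases hJ.2 with h | ⟨s', h⟩ | ⟨t', h⟩ | ⟨s', t', h⟩
        · exact haB (by rw [h]; exact hat)
        · exact haB (by rw [h]; exact hB.2.1 _ _ hat)
        · exact haB (by rw [h]; exact hB.2.2 _ _ hat)
        · exact haB (by rw [h]; exact hB.2.2 _ _ (hB.2.1 _ _ hat))
      · have hJ' : eqvJAct (reesSm sm B) (reesRm rm B)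
            (some ⟨rm a t, hat⟩) (some ⟨a, haB⟩) :=
          ⟨(leJ_rees_iff hB hat haB).mpr hJ.1, (leJ_rees_iff hB haB hat).mpr hJ.2⟩
        have hJ'' : eqvJAct (reesSm sm B) (reesRm rm B)
            (reesRm rm B (some ⟨a, haB⟩) t) (some ⟨a, haB⟩) := by
          rwa [reesRm_some, dif_neg hat]
        have hR := hQst (some ⟨a, haB⟩) t hJ''
        rw [reesRm_some, dif_neg hat] at hR
        exact ⟨(leR_rees_iff hB hat haB).mp hR.1, (leR_rees_iff hB haB hat).mp hR.2⟩

end AuxProofs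

/-- A biact `A` is left stable iff both a subact `B` and the Rees quotient `A/B`
are left stable, and `A` is stable iff both `B` and `A/B` are stable. -/
theorem stable_iff_subact_and_reesQuotient {S T A : Type*} [Semigroup S] [Semigroup T]
    (sm : S → A → A) (rm : A → T → A) (hbi : IsBiact sm rm)
    (B : Set A) (hB : IsSubact sm rm B) :
    (LeftStableAct sm rm ↔
      (LeftStableAct (fun (s : S) (b : B) => (⟨sm s b.1, hB.2.1 s b.1 b.2⟩ : B))
                     (fun (b : B) (t : T) => (⟨rm b.1 t, hB.2.2 t b.1 b.2⟩ : B)) ∧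
       LeftStableAct (reesSm sm B) (reesRm rm B))) ∧
    (StableAct sm rm ↔
      (StableAct (fun (s : S) (b : B) => (⟨sm s b.1, hB.2.1 s b.1 b.2⟩ : B))
                 (fun (b : B) (t : T) => (⟨rm b.1 t, hB.2.2 t b.1 b.2⟩ : B)) ∧
       StableAct (reesSm sm B) (reesRm rm B))) := by
  refine ⟨left_stable_iff hB, ?_⟩
  simp only [StableAct]
  rw [left_stable_iff hB, right_stable_iff hB]
  tauto
end

section
/- Let S be a semigroup and T a subsemigroup of S such that only finitely many L-classes of the T-biact _T S_T are contained in S∖T. Then: (1) if S is left stable, then T is left stable; and (2) T is left stable if and only if the T-biact _T S_T is left stable. -/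
/-! Write `Aₙ = pⁿ a`. When `a = p a r` with `p, r ∈ T`, the chain `A₀ ≥_L A₁ ≥_L ⋯` (relative
to `T`) satisfies `Aₙ₊₁ r = Aₙ`, so any reverse inequality `Aⱼ ≤_L Aₖ` with `j < k` can be
pushed down to `a ≤_L p a`, which is exactly the missing half of `p a L a`. Such an inequality
is forced by pigeonhole on the finitely many `L`-classes outside `T`, unless some element of the
relevant sequence lies in `T`: for the sequence `Aₙ` itself, left stability of `T` applies to
that element; when `S` is left stable, `a = y A_N` for some `y ∈ S` and one runs the argument
on the sequence `pʲ y`, whose members satisfy `(pʲ y) A_N = Aⱼ`. -/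

section LeftStable

variable {S : Type*} [Semigroup S] {T : Set S}

lemma leLW_refl (a : S) : leLW T a a := Or.inl rfl

lemma leLW_mul_left {t : S} (ht : t ∈ T) (a : S) : leLW T (t * a) a := Or.inr ⟨t, ht, rfl⟩

lemma leLW.trans (hT : ∀ a ∈ T, ∀ b ∈ T, a * b ∈ T) {a b c : S}
    (hab : leLW T a b) (hbc : leLW T b c) : leLW T a c := by
  rcases hab with rfl | ⟨t, ht, rfl⟩
  · exact hbc
  · rcases hbc with rfl | ⟨t', ht', rfl⟩
    · exact leLW_mul_left ht _
    · exact Or.inr ⟨t * t', hT t ht t' ht', (mul_assoc t t' c).symm⟩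

lemma leLW.mul_right {a b : S} (h : leLW T a b) (c : S) : leLW T (a * c) (b * c) := by
  rcases h with rfl | ⟨t, ht, rfl⟩
  · exact leLW_refl _
  · exact Or.inr ⟨t, ht, mul_assoc t b c⟩

lemma eqvLW_equivalence (hT : ∀ a ∈ T, ∀ b ∈ T, a * b ∈ T) : Equivalence (eqvLW T) where
  refl a := ⟨leLW_refl a, leLW_refl a⟩
  symm h := ⟨h.2, h.1⟩
  trans h₁ h₂ := ⟨h₁.1.trans hT h₂.1, h₂.2.trans hT h₁.2⟩

lemma LeftStableOn.mono {W C C' : Set S} (h : LeftStableOn W C) (hC : C' ⊆ C) :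
    LeftStableOn W C' :=
  fun a ha => h a (hC ha)

lemma exists_bound_mem_or_leLW (hT : ∀ a ∈ T, ∀ b ∈ T, a * b ∈ T)
    (hfin : Finite (Quot fun a b : {x : S // x ∉ T} => eqvLW T a.1 b.1)) :
    ∃ N, ∀ g : ℕ → S, (∃ j < N, g j ∈ T) ∨ ∃ j k, j < k ∧ k < N ∧ leLW T (g j) (g k) := by
  set Q := Quot fun a b : {x : S // x ∉ T} => eqvLW T a.1 b.1
  have := Fintype.ofFinite Q
  refine ⟨Fintype.card Q + 1, fun g => ?_⟩
  by_cases hmem : ∃ j < Fintype.card Q + 1, g j ∈ T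
  · exact Or.inl hmem
  push Not at hmem
  obtain ⟨j, k, hjk, hclass⟩ := Fintype.exists_ne_map_eq_of_card_lt
    (fun i : Fin (Fintype.card Q + 1) =>
      (Quot.mk _ ⟨g i, hmem i i.2⟩ : Q))
    (by rw [Fintype.card_fin]; convert Nat.lt_succ_self _)
  have hL : eqvLW T (g j) (g k) :=
    ((eqvLW_equivalence hT).comap Subtype.val).eqvGen_iff.mp (Quot.eqvGen_exact hclass)
  rcases Fin.lt_or_lt_of_ne hjk with hlt | hlt
  · exact Or.inr ⟨j, k, hlt, k.2, hL.1⟩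
  · exact Or.inr ⟨k, j, hlt, j.2, hL.2⟩

lemma iterate_mul_left_mul (p x y : S) (n : ℕ) :
    (p * ·)^[n] x * y = (p * ·)^[n] (x * y) :=
  Function.Semiconj.iterate_right (f := (· * y)) (fun x => mul_assoc p x y) n x

lemma leLW_iterate_mul_left (hT : ∀ a ∈ T, ∀ b ∈ T, a * b ∈ T) {p : S} (hp : p ∈ T)
    (a : S) {m n : ℕ} (hmn : m ≤ n) : leLW T ((p * ·)^[n] a) ((p * ·)^[m] a) := by
  induction n, hmn using Nat.le_induction with
  | base => exact leLW_refl _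
  | succ n _ ih =>
    rw [Function.iterate_succ_apply']
    exact (leLW_mul_left hp _).trans hT ih

variable {p a r : S}

lemma iterate_succ_mul_of_eq (h : a = p * a * r) (n : ℕ) :
    (p * ·)^[n + 1] a * r = (p * ·)^[n] a := by
  rw [Function.iterate_succ_apply, iterate_mul_left_mul, ← h]

lemma exists_eq_iterate_mul_of_eq (h : a = p * a * r) (n : ℕ) :
    ∃ t, a = (p * ·)^[n + 1] a * t := by
  induction n with
  | zero => exact ⟨r, h⟩
  | succ n ih =>
    obtain ⟨t, ht⟩ := ih
    exact ⟨r * t, by rw [← mul_assoc, iterate_succ_mul_of_eq h]; exact ht⟩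

lemma leLW_of_leLW_iterate_add (h : a = p * a * r) {j k : ℕ} :
    ∀ i, leLW T ((p * ·)^[j + i] a) ((p * ·)^[k + i] a) →
      leLW T ((p * ·)^[j] a) ((p * ·)^[k] a)
  | 0, hle => hle
  | i + 1, hle => by
    have := hle.mul_right r
    rw [← add_assoc, ← add_assoc, iterate_succ_mul_of_eq h, iterate_succ_mul_of_eq h] at this
    exact leLW_of_leLW_iterate_add h i this

lemma leLW_mul_of_leLW_iterate (hT : ∀ a ∈ T, ∀ b ∈ T, a * b ∈ T) (hp : p ∈ T)
    (h : a = p * a * r) {j k : ℕ} (hjk : j < k)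
    (hle : leLW T ((p * ·)^[j] a) ((p * ·)^[k] a)) : leLW T a (p * a) := by
  obtain ⟨d, rfl⟩ := Nat.exists_eq_add_of_lt hjk
  have hdown : leLW T a ((p * ·)^[d + 1] a) :=
    leLW_of_leLW_iterate_add h (j := 0) j (by rwa [zero_add, show d + 1 + j = j + d + 1 by omega])
  exact hdown.trans hT (leLW_iterate_mul_left hT hp a (m := 1) (by omega))

lemma leLW_mul_of_leftStableOn_self (hT : ∀ a ∈ T, ∀ b ∈ T, a * b ∈ T)
    (hfin : Finite (Quot fun a b : {x : S // x ∉ T} => eqvLW T a.1 b.1))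
    (hstab : LeftStableOn T T) (hp : p ∈ T) (hr : r ∈ T) (h : a = p * a * r) :
    leLW T a (p * a) := by
  obtain ⟨N, hN⟩ := exists_bound_mem_or_leLW hT hfin
  rcases hN fun n => (p * ·)^[n] a with ⟨j, -, hjT⟩ | ⟨j, k, hjk, -, hle⟩
  · have hsucc : (p * ·)^[j + 1] a = p * (p * ·)^[j] a := Function.iterate_succ_apply' ..
    have hJ : eqvJW T (p * (p * ·)^[j] a) ((p * ·)^[j] a) :=
      ⟨Or.inr (Or.inl ⟨p, hp, rfl⟩),
        Or.inr (Or.inr (Or.inl ⟨r, hr, by rw [← hsucc, iterate_succ_mul_of_eq h]⟩))⟩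
    refine leLW_mul_of_leLW_iterate hT hp h (Nat.lt_succ_self j) ?_
    rw [hsucc]
    exact (hstab _ hjT p hp hJ).2
  · exact leLW_mul_of_leLW_iterate hT hp h hjk hle

lemma leLW_mul_of_leftStableOn_univ (hT : ∀ a ∈ T, ∀ b ∈ T, a * b ∈ T)
    (hfin : Finite (Quot fun a b : {x : S // x ∉ T} => eqvLW T a.1 b.1))
    (hstab : LeftStableOn (Set.univ : Set S) Set.univ) (hp : p ∈ T) (h : a = p * a * r) :
    leLW T a (p * a) := by
  obtain ⟨N, hN⟩ := exists_bound_mem_or_leLW hT hfin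
  set A := (p * ·)^[N + 1] a
  have hA : A = (p * ·)^[N] p * a := by rw [iterate_mul_left_mul, ← Function.iterate_succ_apply]
  obtain ⟨t, ht⟩ := exists_eq_iterate_mul_of_eq h N
  have hJ : eqvJW Set.univ ((p * ·)^[N] p * a) a :=
    ⟨Or.inr (Or.inl ⟨_, trivial, rfl⟩), Or.inr (Or.inr (Or.inl ⟨t, trivial, hA ▸ ht⟩))⟩
  obtain ⟨y, hy⟩ : ∃ y, a = y * A := by
    rcases (hstab a trivial _ trivial hJ).2 with ha | ⟨y, -, hy⟩
    · exact ⟨(p * ·)^[N] p, by rw [hA, ← ha, ← ha]⟩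
    · exact ⟨y, hA ▸ hy⟩
  have hyA (j : ℕ) : (p * ·)^[j] y * A = (p * ·)^[j] a := by rw [iterate_mul_left_mul, ← hy]
  rcases hN fun j => (p * ·)^[j] y with ⟨j, hjN, hjT⟩ | ⟨j, k, hjk, -, hle⟩
  · exact leLW_mul_of_leLW_iterate hT hp h (Nat.lt_succ_of_lt hjN)
      (by rw [← hyA j]; exact leLW_mul_left hjT A)
  · exact leLW_mul_of_leLW_iterate hT hp h hjk (by rw [← hyA j, ← hyA k]; exact hle.mul_right A)

lemma leftStableOn_univ_of_leLW_mul (hT : ∀ a ∈ T, ∀ b ∈ T, a * b ∈ T)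
    (hkey : ∀ a p r : S, p ∈ T → r ∈ T → a = p * a * r → leLW T a (p * a)) :
    LeftStableOn T (Set.univ : Set S) := by
  intro a _ t ht hJ
  refine ⟨leLW_mul_left ht a, ?_⟩
  rcases hJ.2 with h | h | ⟨r, hr, h⟩ | ⟨s, hs, r, hr, h⟩
  · exact Or.inl h
  · exact Or.inr h
  · exact hkey a t r ht hr h
  · rw [← mul_assoc] at h
    exact (hkey a (s * t) r (hT s hs t ht) hr h).trans hT (by rw [mul_assoc]; exact leLW_mul_left hs _)

end LeftStable

theorem leftStable_subsemigroup_finitely_many_L_classes_general {S : Type*} [Semigroup S]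
    (T : Set S) (hT : ∀ a ∈ T, ∀ b ∈ T, a * b ∈ T)
    (hfin : Finite (Quot fun a b : {x : S // x ∉ T} => eqvLW T a.1 b.1)) :
    (LeftStableOn (Set.univ : Set S) Set.univ → LeftStableOn T T) ∧
    (LeftStableOn T T ↔ LeftStableOn T (Set.univ : Set S)) := by
  refine ⟨fun hS => ?_, fun hTT => ?_, fun hU => hU.mono (Set.subset_univ T)⟩
  · exact (leftStableOn_univ_of_leLW_mul hT fun _ _ _ hp _ h =>
      leLW_mul_of_leftStableOn_univ hT hfin hS hp h).mono (Set.subset_univ T)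
  · exact leftStableOn_univ_of_leLW_mul hT fun _ _ _ hp hr h =>
      leLW_mul_of_leftStableOn_self hT hfin hTT hp hr h

/-- Let `T` be a subsemigroup of `S` with only finitely many `L`-classes of the
`T`-biact `_T S_T` contained in `S \ T`.  Then: (1) if `S` is left stable then `T` is
left stable; (2) `T` is left stable iff the `T`-biact `_T S_T` is left stable. -/
theorem leftStable_subsemigroup_finitely_many_L_classes {S : Type*} [Semigroup S]
    (T : Set S) (hT0 : T.Nonempty) (hT : ∀ a ∈ T, ∀ b ∈ T, a * b ∈ T)
    (hfin : Finite (Quot fun a b : {x : S // x ∉ T} => eqvLW T a.1 b.1)) :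
    (LeftStableOn (Set.univ : Set S) Set.univ → LeftStableOn T T) ∧
    (LeftStableOn T T ↔ LeftStableOn T (Set.univ : Set S)) :=
  leftStable_subsemigroup_finitely_many_L_classes_general T hT hfin
end

section
/- Let S be a semigroup and T a subsemigroup of S of finite Green index, i.e. only finitely many H-classes of the T-biact _T S_T are contained in S∖T, where H = L ∩ R. Then the following are equivalent: (1) S is left stable; (2) T is left stable; (3) the T-biact _T S_T is left stable. The same three-way equivalence holds with 'stable' in place of 'left stable'. -/
namespace SFGI

variable {S : Type*}

def lel (μ : S → S → S) (W : Set S) (a b : S) : Prop := a = b ∨ ∃ t ∈ W, a = μ t b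
def ler (μ : S → S → S) (W : Set S) (a b : S) : Prop := a = b ∨ ∃ t ∈ W, a = μ b t
def lej (μ : S → S → S) (W : Set S) (a b : S) : Prop :=
  a = b ∨ (∃ s ∈ W, a = μ s b) ∨ (∃ t ∈ W, a = μ b t) ∨ ∃ s ∈ W, ∃ t ∈ W, a = μ (μ s b) t
def lstab (μ : S → S → S) (W C : Set S) : Prop :=
  ∀ a ∈ C, ∀ s ∈ W, (lej μ W (μ s a) a ∧ lej μ W a (μ s a)) →
    (lel μ W (μ s a) a ∧ lel μ W a (μ s a))

def pw (μ : S → S → S) (s : S) : ℕ → S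
  | 0 => s
  | k + 1 => μ (pw μ s k) s

lemma pw_mem_of {μ : S → S → S} {W : Set S} (hW : ∀ a ∈ W, ∀ b ∈ W, μ a b ∈ W)
    {s : S} (hs : s ∈ W) : ∀ k, pw μ s k ∈ W
  | 0 => hs
  | k + 1 => hW _ (pw_mem_of hW hs k) _ hs

structure Ctx (S : Type*) where
  μ : S → S → S
  T : Set S
  assoc : ∀ a b c : S, μ (μ a b) c = μ a (μ b c)
  hT : ∀ a ∈ T, ∀ b ∈ T, μ a b ∈ T
  r : {x : S // x ∉ T} → {x : S // x ∉ T} → Prop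
  hre : Equivalence r
  hfin : Finite (Quot r)
  hrL : ∀ a b, r a b → lel μ T a.1 b.1
  hrR : ∀ a b, r a b → ler μ T a.1 b.1

namespace Ctx

variable (c : Ctx S)

def lm (s : S) : S → S := fun x => c.μ s x
def rm (q : S) : S → S := fun x => c.μ x q

lemma pw_mul (s : S) : ∀ (k : ℕ) (x : S), c.μ (pw c.μ s k) x = (c.lm s)^[k + 1] x := by
  intro k
  induction k with
  | zero => intro x; rfl
  | succ k ih =>
    intro x
    calc c.μ (pw c.μ s (k + 1)) x = c.μ (pw c.μ s k) (c.μ s x) := c.assoc _ _ _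
    _ = (c.lm s)^[k + 1] (c.μ s x) := ih (c.μ s x)
    _ = (c.lm s)^[k + 1 + 1] x := (Function.iterate_succ_apply (c.lm s) (k + 1) x).symm

lemma mul_pw (q : S) : ∀ (k : ℕ) (x : S), c.μ x (pw c.μ q k) = (c.rm q)^[k + 1] x := by
  intro k
  induction k with
  | zero => intro x; rfl
  | succ k ih =>
    intro x
    calc c.μ x (pw c.μ q (k + 1)) = c.μ (c.μ x (pw c.μ q k)) q := (c.assoc _ _ _).symm
    _ = c.μ ((c.rm q)^[k + 1] x) q := by rw [ih x]
    _ = (c.rm q)^[k + 1 + 1] x := (Function.iterate_succ_apply' (c.rm q) (k + 1) x).symm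

lemma lr_comm (s q : S) : ∀ (n : ℕ) (x : S),
    c.μ ((c.lm s)^[n] x) q = (c.lm s)^[n] (c.μ x q) := by
  intro n
  induction n with
  | zero => intro x; rfl
  | succ n ih =>
    intro x
    calc c.μ ((c.lm s)^[n + 1] x) q
        = c.μ (c.μ s ((c.lm s)^[n] x)) q :=
          congrArg (fun z => c.μ z q) (Function.iterate_succ_apply' (c.lm s) n x)
    _ = c.μ s (c.μ ((c.lm s)^[n] x) q) := c.assoc _ _ _
    _ = c.μ s ((c.lm s)^[n] (c.μ x q)) := by rw [ih x]
    _ = (c.lm s)^[n + 1] (c.μ x q) := (Function.iterate_succ_apply' (c.lm s) n _).symm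

lemma mu_iter_rm (q t : S) : ∀ (n : ℕ) (z : S),
    (c.rm q)^[n] (c.μ t z) = c.μ t ((c.rm q)^[n] z) := by
  intro n
  induction n with
  | zero => intro z; rfl
  | succ n ih =>
    intro z
    calc (c.rm q)^[n + 1] (c.μ t z)
        = (c.rm q)^[n] (c.rm q (c.μ t z)) := Function.iterate_succ_apply _ _ _
    _ = (c.rm q)^[n] (c.μ t (c.rm q z)) := by
          rw [show c.rm q (c.μ t z) = c.μ t (c.rm q z) from c.assoc _ _ _]
    _ = c.μ t ((c.rm q)^[n] (c.rm q z)) := ih _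
    _ = c.μ t ((c.rm q)^[n + 1] z) := by rw [← Function.iterate_succ_apply]

lemma orbit_step {a s q : S} (h : a = c.μ (c.μ s a) q) (m : ℕ) :
    c.rm q ((c.lm s)^[m + 1] a) = (c.lm s)^[m] a := by
  show c.μ ((c.lm s)^[m + 1] a) q = _
  rw [Function.iterate_succ_apply, c.lr_comm]
  have h2 : c.μ (c.lm s a) q = a := h.symm
  rw [h2]

lemma xdown2 {a s q : S} (h : a = c.μ (c.μ s a) q) :
    ∀ (n k : ℕ), (c.rm q)^[n] ((c.lm s)^[n + k] a) = (c.lm s)^[k] a := by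
  intro n
  induction n with
  | zero => intro k; simp
  | succ n ih =>
    intro k
    rw [show n + 1 + k = (n + k) + 1 from by omega,
      Function.iterate_succ_apply (c.rm q), c.orbit_step h (n + k)]
    exact ih k

lemma xdown {a s q : S} (h : a = c.μ (c.μ s a) q) (n : ℕ) :
    (c.rm q)^[n] ((c.lm s)^[n] a) = a :=
  c.xdown2 h n 0

lemma descend_eq {W : Set S} (hW : ∀ a ∈ W, ∀ b ∈ W, c.μ a b ∈ W) {a s q : S}
    (h : a = c.μ (c.μ s a) q) (hs : s ∈ W) {j d : ℕ}
    (heq : (c.lm s)^[j] a = (c.lm s)^[j + (d + 1)] a) : lel c.μ W a (c.μ s a) := by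
  have h0 : a = (c.lm s)^[d + 1] a := by
    calc a = (c.rm q)^[j] ((c.lm s)^[j] a) := (c.xdown h j).symm
    _ = (c.rm q)^[j] ((c.lm s)^[j + (d + 1)] a) := by rw [heq]
    _ = (c.lm s)^[d + 1] a := c.xdown2 h j (d + 1)
  rw [Function.iterate_succ_apply] at h0
  cases d with
  | zero => exact Or.inl h0
  | succ d' =>
    refine Or.inr ⟨pw c.μ s d', pw_mem_of hW hs d', ?_⟩
    rw [c.pw_mul]
    exact h0

lemma descend_w {W : Set S} (hW : ∀ a ∈ W, ∀ b ∈ W, c.μ a b ∈ W) {a s q w : S}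
    (h : a = c.μ (c.μ s a) q) (hs : s ∈ W) (hw : w ∈ W) {j d : ℕ}
    (heq : (c.lm s)^[j] a = c.μ w ((c.lm s)^[j + (d + 1)] a)) : lel c.μ W a (c.μ s a) := by
  have h0 : a = c.μ w ((c.lm s)^[d + 1] a) := by
    calc a = (c.rm q)^[j] ((c.lm s)^[j] a) := (c.xdown h j).symm
    _ = (c.rm q)^[j] (c.μ w ((c.lm s)^[j + (d + 1)] a)) := by rw [heq]
    _ = c.μ w ((c.rm q)^[j] ((c.lm s)^[j + (d + 1)] a)) := c.mu_iter_rm q w j _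
    _ = c.μ w ((c.lm s)^[d + 1] a) := by rw [c.xdown2 h j (d + 1)]
  rw [Function.iterate_succ_apply] at h0
  cases d with
  | zero => exact Or.inr ⟨w, hw, h0⟩
  | succ d' =>
    refine Or.inr ⟨c.μ w (pw c.μ s d'), hW _ hw _ (pw_mem_of hW hs d'), ?_⟩
    rw [c.assoc, c.pw_mul]
    exact h0

lemma rel_of_mk_eq {x y : {z : S // z ∉ c.T}} (h : Quot.mk c.r x = Quot.mk c.r y) :
    c.r x y := by
  letI sd : Setoid {z : S // z ∉ c.T} := ⟨c.r, c.hre⟩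
  exact @Quotient.exact _ sd _ _ h

lemma pigeon (f : ℕ → S) (hf : ∀ n, f n ∉ c.T) :
    ∃ k k', k < k' ∧ c.r ⟨f k, hf k⟩ ⟨f k', hf k'⟩ := by
  have : Finite (Quot c.r) := c.hfin
  obtain ⟨k, k', hne, he⟩ := Finite.exists_ne_map_eq_of_infinite
    (fun n : ℕ => Quot.mk c.r ⟨f n, hf n⟩)
  have hrel := c.rel_of_mk_eq he
  rcases lt_or_gt_of_ne hne with hlt | hlt
  · exact ⟨k, k', hlt, hrel⟩
  · exact ⟨k', k, hlt, c.hre.symm hrel⟩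

lemma pigeon2 (f : ℕ → S) (hf : ∀ N, ∃ n, N ≤ n ∧ f n ∉ c.T) :
    ∃ n m, n < m ∧ ∃ (hn : f n ∉ c.T) (hm : f m ∉ c.T), c.r ⟨f n, hn⟩ ⟨f m, hm⟩ := by
  choose F hF1 hF2 using hf
  let g : ℕ → ℕ := fun n => Nat.rec (F 0) (fun _ prev => F (prev + 1)) n
  have hg0 : ∀ n, f (g n) ∉ c.T := by
    intro n
    cases n with
    | zero => exact hF2 0
    | succ k => exact hF2 (g k + 1)
  have hglt : ∀ n, g n < g (n + 1) := fun n =>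
    Nat.lt_of_lt_of_le (Nat.lt_succ_self _) (hF1 (g n + 1))
  have hmono : StrictMono g := strictMono_nat_of_lt_succ hglt
  obtain ⟨k, k', hlt, hrel⟩ := c.pigeon (fun n => f (g n)) hg0
  exact ⟨g k, g k', hmono hlt, hg0 k, hg0 k', hrel⟩


/-- Lemma A: if `T` (as a semigroup) is left stable then from `a = s·a·q` with
`s, q ∈ T` we get `a ≤_L^T s·a`. -/
lemma genA (hstabT : lstab c.μ c.T c.T) {a s q : S}
    (hs : s ∈ c.T) (hq : q ∈ c.T) (h : a = c.μ (c.μ s a) q) :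
    lel c.μ c.T a (c.μ s a) := by
  by_cases hN : ∃ N, ∀ n, N ≤ n → (c.lm s)^[n] a ∈ c.T
  · obtain ⟨N, hN⟩ := hN
    have hbT : (c.lm s)^[N] a ∈ c.T := hN N le_rfl
    have hb' : (c.lm s)^[N] a = c.μ (c.μ s ((c.lm s)^[N] a)) q := by
      conv_lhs => rw [← c.orbit_step h N]
      rw [Function.iterate_succ_apply']
      rfl
    have hst := (hstabT _ hbT s hs
      ⟨Or.inr (Or.inl ⟨s, hs, rfl⟩), Or.inr (Or.inr (Or.inl ⟨q, hq, hb'⟩))⟩).2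
    have hmu : c.μ s ((c.lm s)^[N] a) = (c.lm s)^[N + 1] a :=
      (Function.iterate_succ_apply' _ _ _).symm
    rw [hmu] at hst
    rcases hst with h1 | ⟨τ, hτ, h1⟩
    · exact c.descend_eq c.hT h hs (j := N) (d := 0) h1
    · exact c.descend_w c.hT h hs hτ (j := N) (d := 0) h1
  · push_neg at hN
    obtain ⟨n, m, hlt, hn, hm, hrel⟩ := c.pigeon2 (fun n => (c.lm s)^[n] a) hN
    obtain ⟨d, hd⟩ : ∃ d, m = n + (d + 1) := ⟨m - n - 1, by omega⟩
    rcases c.hrL _ _ hrel with h1 | ⟨τ, hτ, h1⟩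
    · have h1' : (c.lm s)^[n] a = (c.lm s)^[n + (d + 1)] a := by
        rw [← hd]; exact h1
      exact c.descend_eq c.hT h hs h1'
    · have h1' : (c.lm s)^[n] a = c.μ τ ((c.lm s)^[n + (d + 1)] a) := by
        rw [← hd]; exact h1
      exact c.descend_w c.hT h hs hτ h1'

/-- Core lemma for (1)→(3): if `S` is left stable then from `a = s·a·q` with
`s ∈ T` (and `q ∈ S` arbitrary) we get `a ≤_L^T s·a`. -/
lemma genCoreT (hS : lstab c.μ Set.univ Set.univ) {a s q : S}
    (hs : s ∈ c.T) (h : a = c.μ (c.μ s a) q) : lel c.μ c.T a (c.μ s a) := by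
  classical
  haveI : Finite (Quot c.r) := c.hfin
  haveI : Fintype (Quot c.r) := Fintype.ofFinite _
  set C : ℕ := Fintype.card (Quot c.r) + 1 with hC
  have hwit : ∀ j, j < C → ((c.lm s)^[j] a = (c.lm s)^[C] a ∨
      ∃ w : S, (c.lm s)^[j] a = c.μ w ((c.lm s)^[C] a)) := by
    intro j hj
    obtain ⟨d, hd⟩ : ∃ d, C = j + (d + 1) := ⟨C - j - 1, by omega⟩
    have hkey : c.μ (pw c.μ s d) ((c.lm s)^[j] a) = (c.lm s)^[C] a := by
      rw [c.pw_mul, ← Function.iterate_add_apply, hd, Nat.add_comm (d + 1) j]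
    have hJ2 : lej c.μ Set.univ ((c.lm s)^[j] a)
        (c.μ (pw c.μ s d) ((c.lm s)^[j] a)) := by
      rw [hkey]
      refine Or.inr (Or.inr (Or.inl ⟨pw c.μ q d, trivial, ?_⟩))
      rw [c.mul_pw, hd, Nat.add_comm j (d + 1)]
      exact (c.xdown2 h (d + 1) j).symm
    have hst := (hS ((c.lm s)^[j] a) trivial (pw c.μ s d) trivial
      ⟨Or.inr (Or.inl ⟨pw c.μ s d, trivial, rfl⟩), hJ2⟩).2
    rw [hkey] at hst
    rcases hst with h1 | ⟨w, _, h1⟩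
    · exact Or.inl h1
    · exact Or.inr ⟨w, h1⟩
  by_cases hgood : ∃ j, j < C ∧ ((c.lm s)^[j] a = (c.lm s)^[C] a ∨
      ∃ w ∈ c.T, (c.lm s)^[j] a = c.μ w ((c.lm s)^[C] a))
  · obtain ⟨j, hj, hca⟩ := hgood
    obtain ⟨d, hd⟩ : ∃ d, C = j + (d + 1) := ⟨C - j - 1, by omega⟩
    rcases hca with h1 | ⟨w, hw, h1⟩
    · rw [hd] at h1
      exact c.descend_eq c.hT h hs h1
    · rw [hd] at h1
      exact c.descend_w c.hT h hs hw h1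
  · push_neg at hgood
    have hv : ∀ j : Fin C, ∃ w : S, w ∉ c.T ∧
        (c.lm s)^[j.1] a = c.μ w ((c.lm s)^[C] a) := by
      intro j
      obtain h1 | ⟨w, hw⟩ := hwit j.1 j.2
      · exact absurd h1 (hgood j.1 j.2).1
      · exact ⟨w, fun hwT => (hgood j.1 j.2).2 w hwT hw, hw⟩
    choose v hv1 hv2 using hv
    obtain ⟨j, j', hne, hqe⟩ := Fintype.exists_ne_map_eq_of_card_lt
      (fun j : Fin C => Quot.mk c.r ⟨v j, hv1 j⟩) (by simp [hC])
    have key : ∀ j j' : Fin C, j.1 < j'.1 →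
        c.r ⟨v j, hv1 j⟩ ⟨v j', hv1 j'⟩ → lel c.μ c.T a (c.μ s a) := by
      intro j j' hlt hr
      obtain ⟨d, hd⟩ : ∃ d, (j' : ℕ) = j.1 + (d + 1) := ⟨j'.1 - j.1 - 1, by omega⟩
      rcases c.hrL _ _ hr with h1 | ⟨τ, hτ, h1⟩
      · have h1' : v j = v j' := h1
        have heq : (c.lm s)^[j.1] a = (c.lm s)^[j.1 + (d + 1)] a := by
          rw [← hd, hv2 j, h1', ← hv2 j']
        exact c.descend_eq c.hT h hs heq
      · have h1' : v j = c.μ τ (v j') := h1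
        have heq : (c.lm s)^[j.1] a = c.μ τ ((c.lm s)^[j.1 + (d + 1)] a) := by
          rw [← hd, hv2 j, h1', c.assoc, ← hv2 j']
        exact c.descend_w c.hT h hs hτ heq
    have hrel := c.rel_of_mk_eq hqe
    rcases lt_or_gt_of_ne hne with hlt | hlt
    · exact key j j' hlt hrel
    · exact key j' j hlt (c.hre.symm hrel)

/-- Core lemma for (3)→(1), part 1: if the biact is left stable then from
`b = (v·b)·t` with `t ∈ T` (and `v ∈ S` arbitrary) we get `b ≤_L^S v·b`. -/
lemma genCore (h3 : lstab c.μ c.T Set.univ) {b v t : S} (ht : t ∈ c.T)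
    (h : b = c.μ (c.μ v b) t) : lel c.μ Set.univ b (c.μ v b) := by
  have hWu : ∀ a ∈ (Set.univ : Set S), ∀ b ∈ (Set.univ : Set S),
      c.μ a b ∈ (Set.univ : Set S) := fun _ _ _ _ => trivial
  by_cases hk : ∃ k, pw c.μ v k ∈ c.T
  · obtain ⟨k, hk⟩ := hk
    have hb2 : b = c.μ (c.μ (pw c.μ v k) b) (pw c.μ t k) := by
      rw [c.pw_mul, c.mul_pw]
      exact (c.xdown h (k + 1)).symm
    have hst := (h3 b trivial (pw c.μ v k) hk
      ⟨Or.inr (Or.inl ⟨pw c.μ v k, hk, rfl⟩),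
       Or.inr (Or.inr (Or.inl ⟨pw c.μ t k, pw_mem_of c.hT ht k, hb2⟩))⟩).2
    rcases hst with h1 | ⟨τ, hτ, h1⟩
    · refine c.descend_eq hWu h trivial (j := 0) (d := k) ?_
      simpa [c.pw_mul] using h1
    · refine c.descend_w hWu h trivial (w := τ) trivial (j := 0) (d := k) ?_
      simpa [c.pw_mul] using h1
  · push_neg at hk
    obtain ⟨k, k', hlt, hrel⟩ := c.pigeon (fun k => pw c.μ v k) hk
    obtain ⟨e', he'⟩ : ∃ e', k' = k + (e' + 1) := ⟨k' - k - 1, by omega⟩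
    rcases c.hrL _ _ hrel with h1 | ⟨τ, hτ, h1⟩
    · have h2 : pw c.μ v k = pw c.μ v k' := h1
      refine c.descend_eq hWu h trivial (j := k + 1) (d := e') ?_
      have hh : (c.lm v)^[k + 1] b = (c.lm v)^[k' + 1] b := by
        rw [← c.pw_mul, ← c.pw_mul, h2]
      rw [show (k + 1) + (e' + 1) = k' + 1 from by omega]
      exact hh
    · have h2 : pw c.μ v k = c.μ τ (pw c.μ v k') := h1
      refine c.descend_w hWu h trivial (w := τ) trivial (j := k + 1) (d := e') ?_
      have hh : (c.lm v)^[k + 1] b = c.μ τ ((c.lm v)^[k' + 1] b) := by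
        rw [← c.pw_mul, ← c.pw_mul, h2, c.assoc]
      rw [show (k + 1) + (e' + 1) = k' + 1 from by omega]
      exact hh

/-- Core lemma for (3)→(1), part 2: if the biact is left stable then from
`a = (u·a)·q` with `u, q ∈ S` arbitrary we get `a ≤_L^S u·a`. -/
lemma genDagger (h3 : lstab c.μ c.T Set.univ) {a u q : S}
    (h : a = c.μ (c.μ u a) q) : lel c.μ Set.univ a (c.μ u a) := by
  have hWu : ∀ x ∈ (Set.univ : Set S), ∀ y ∈ (Set.univ : Set S),
      c.μ x y ∈ (Set.univ : Set S) := fun _ _ _ _ => trivial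
  by_cases hk : ∃ k, pw c.μ q k ∈ c.T
  · obtain ⟨k, hk⟩ := hk
    have hshape : a = c.μ (c.μ (pw c.μ u k) a) (pw c.μ q k) := by
      rw [c.pw_mul, c.mul_pw]
      exact (c.xdown h (k + 1)).symm
    rcases c.genCore h3 hk hshape with h1 | ⟨w, _, h1⟩
    · refine c.descend_eq hWu h trivial (j := 0) (d := k) ?_
      simpa [c.pw_mul] using h1
    · refine c.descend_w hWu h trivial (w := w) trivial (j := 0) (d := k) ?_
      simpa [c.pw_mul] using h1
  · push_neg at hk
    obtain ⟨k, k', hlt, hrel⟩ := c.pigeon (fun k => pw c.μ q k) hk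
    have hR := c.hrR _ _ (c.hre.symm hrel)
    obtain ⟨e', he'⟩ : ∃ e', k' = k + (e' + 1) := ⟨k' - k - 1, by omega⟩
    rcases hR with h1 | ⟨τ, hτ, h1⟩
    · have h2 : pw c.μ q k' = pw c.μ q k := h1
      refine c.descend_eq hWu h trivial (j := 0) (d := e') ?_
      have hh : a = (c.lm u)^[e' + 1] a := by
        conv_lhs => rw [← c.xdown h (k' + 1)]
        rw [← c.mul_pw, h2, c.mul_pw,
          show k' + 1 = (k + 1) + (e' + 1) from by omega]
        exact c.xdown2 h (k + 1) (e' + 1)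
      simpa using hh
    · have h2 : pw c.μ q k' = c.μ (pw c.μ q k) τ := h1
      have big : a = c.μ (c.μ (pw c.μ u e') a) τ := by
        conv_lhs => rw [← c.xdown h (k' + 1)]
        rw [← c.mul_pw, h2, ← c.assoc, c.mul_pw,
          show k' + 1 = (k + 1) + (e' + 1) from by omega,
          c.xdown2 h (k + 1) (e' + 1), ← c.pw_mul]
      rcases c.genCore h3 hτ big with h3' | ⟨w, _, h3'⟩
      · refine c.descend_eq hWu h trivial (j := 0) (d := e') ?_
        simpa [c.pw_mul] using h3'
      · refine c.descend_w hWu h trivial (w := w) trivial (j := 0) (d := e') ?_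
        simpa [c.pw_mul] using h3'

/-- (1) → (3). -/
lemma gen13 (hS : lstab c.μ Set.univ Set.univ) : lstab c.μ c.T Set.univ := by
  intro a _ s hs hJ
  refine ⟨Or.inr ⟨s, hs, rfl⟩, ?_⟩
  rcases hJ.2 with heq | ⟨p, hp, heq⟩ | ⟨t, ht, heq⟩ | ⟨p, hp, t, ht, heq⟩
  · exact Or.inl heq
  · exact Or.inr ⟨p, hp, heq⟩
  · exact c.genCoreT hS hs heq
  · rw [← c.assoc p s a] at heq
    rcases c.genCoreT hS (c.hT p hp s hs) heq with h1 | ⟨τ, hτ, h1⟩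
    · refine Or.inr ⟨p, hp, ?_⟩
      conv_lhs => rw [h1]
      rw [c.assoc]
    · refine Or.inr ⟨c.μ τ p, c.hT _ hτ _ hp, ?_⟩
      conv_lhs => rw [h1]
      rw [c.assoc p s a, ← c.assoc]

/-- (2) → (3). -/
lemma gen23 (hstabT : lstab c.μ c.T c.T) : lstab c.μ c.T Set.univ := by
  intro a _ s hs hJ
  refine ⟨Or.inr ⟨s, hs, rfl⟩, ?_⟩
  rcases hJ.2 with heq | ⟨p, hp, heq⟩ | ⟨t, ht, heq⟩ | ⟨p, hp, t, ht, heq⟩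
  · exact Or.inl heq
  · exact Or.inr ⟨p, hp, heq⟩
  · exact c.genA hstabT hs ht heq
  · rw [← c.assoc p s a] at heq
    rcases c.genA hstabT (c.hT p hp s hs) ht heq with h1 | ⟨τ, hτ, h1⟩
    · refine Or.inr ⟨p, hp, ?_⟩
      conv_lhs => rw [h1]
      rw [c.assoc]
    · refine Or.inr ⟨c.μ τ p, c.hT _ hτ _ hp, ?_⟩
      conv_lhs => rw [h1]
      rw [c.assoc p s a, ← c.assoc]

/-- (3) → (1). -/
lemma gen31 (h3 : lstab c.μ c.T Set.univ) : lstab c.μ Set.univ Set.univ := by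
  intro a _ s _ hJ
  refine ⟨Or.inr ⟨s, trivial, rfl⟩, ?_⟩
  rcases hJ.2 with heq | ⟨p, _, heq⟩ | ⟨t, _, heq⟩ | ⟨p, _, t, _, heq⟩
  · exact Or.inl heq
  · exact Or.inr ⟨p, trivial, heq⟩
  · exact c.genDagger h3 heq
  · rw [← c.assoc p s a] at heq
    rcases c.genDagger h3 heq with h1 | ⟨w, _, h1⟩
    · refine Or.inr ⟨p, trivial, ?_⟩
      conv_lhs => rw [h1]
      rw [c.assoc]
    · refine Or.inr ⟨c.μ w p, trivial, ?_⟩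
      conv_lhs => rw [h1]
      rw [c.assoc p s a, ← c.assoc]

end Ctx
end SFGI

namespace SFGI

section Real

variable {S : Type*} [Semigroup S]

lemma leLW_trans {T : Set S} (hT : ∀ a ∈ T, ∀ b ∈ T, a * b ∈ T) {a b c : S}
    (h1 : leLW T a b) (h2 : leLW T b c) : leLW T a c := by
  rcases h1 with rfl | ⟨t, ht, rfl⟩
  · exact h2
  · rcases h2 with rfl | ⟨t', ht', rfl⟩
    · exact Or.inr ⟨t, ht, rfl⟩
    · exact Or.inr ⟨t * t', hT _ ht _ ht', (mul_assoc t t' c).symm⟩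

lemma leRW_trans {T : Set S} (hT : ∀ a ∈ T, ∀ b ∈ T, a * b ∈ T) {a b c : S}
    (h1 : leRW T a b) (h2 : leRW T b c) : leRW T a c := by
  rcases h1 with rfl | ⟨t, ht, rfl⟩
  · exact h2
  · rcases h2 with rfl | ⟨t', ht', rfl⟩
    · exact Or.inr ⟨t, ht, rfl⟩
    · exact Or.inr ⟨t' * t, hT _ ht' _ ht, mul_assoc c t' t⟩

lemma lej_flip {W : Set S} {a b : S} :
    lej (fun x y : S => y * x) W a b ↔ leJW W a b := by
  constructor
  · rintro (h | ⟨s, hs, h⟩ | ⟨t, ht, h⟩ | ⟨s, hs, t, ht, h⟩)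
    · exact Or.inl h
    · exact Or.inr (Or.inr (Or.inl ⟨s, hs, h⟩))
    · exact Or.inr (Or.inl ⟨t, ht, h⟩)
    · exact Or.inr (Or.inr (Or.inr ⟨t, ht, s, hs, by rw [h, mul_assoc]⟩))
  · rintro (h | ⟨s, hs, h⟩ | ⟨t, ht, h⟩ | ⟨s, hs, t, ht, h⟩)
    · exact Or.inl h
    · exact Or.inr (Or.inr (Or.inl ⟨s, hs, h⟩))
    · exact Or.inr (Or.inl ⟨t, ht, h⟩)
    · exact Or.inr (Or.inr (Or.inr ⟨t, ht, s, hs, by rw [h, mul_assoc]⟩))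

lemma lstab_mul_iff {W C : Set S} : lstab (· * ·) W C ↔ LeftStableOn W C := Iff.rfl

lemma rstab_iff {W C : Set S} :
    lstab (fun x y : S => y * x) W C ↔ RightStableOn W C := by
  constructor
  · intro h a ha t ht hJ
    exact h a ha t ht ⟨lej_flip.mpr hJ.1, lej_flip.mpr hJ.2⟩
  · intro h a ha t ht hJ
    exact h a ha t ht ⟨lej_flip.mp hJ.1, lej_flip.mp hJ.2⟩

end Real

end SFGI


/-- Let `T` be a subsemigroup of `S` of finite Green index, i.e. only finitely many
`H`-classes (`H = L ∩ R`) of the `T`-biact `_T S_T` are contained in `S \ T`.  Then: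
`S` is left stable iff `T` is left stable iff `_T S_T` is left stable, and likewise
with `stable` in place of `left stable`. -/
theorem stable_finite_green_index {S : Type*} [Semigroup S]
    (T : Set S) (hT0 : T.Nonempty) (hT : ∀ a ∈ T, ∀ b ∈ T, a * b ∈ T)
    (hfin : Finite (Quot fun a b : {x : S // x ∉ T} =>
      eqvLW T a.1 b.1 ∧ eqvRW T a.1 b.1)) :
    ((LeftStableOn (Set.univ : Set S) Set.univ ↔ LeftStableOn T T) ∧
     (LeftStableOn T T ↔ LeftStableOn T (Set.univ : Set S))) ∧
    ((StableOn (Set.univ : Set S) Set.univ ↔ StableOn T T) ∧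
     (StableOn T T ↔ StableOn T (Set.univ : Set S))) := by

  classical
  have hre : Equivalence (fun a b : {x : S // x ∉ T} =>
      eqvLW T a.1 b.1 ∧ eqvRW T a.1 b.1) := by
    refine ⟨?_, ?_, ?_⟩
    · exact fun a => ⟨⟨Or.inl rfl, Or.inl rfl⟩, Or.inl rfl, Or.inl rfl⟩
    · rintro a b ⟨⟨h1, h2⟩, h3, h4⟩
      exact ⟨⟨h2, h1⟩, h4, h3⟩
    · rintro a b c ⟨⟨h1, h2⟩, h3, h4⟩ ⟨⟨h5, h6⟩, h7, h8⟩
      exact ⟨⟨SFGI.leLW_trans hT h1 h5, SFGI.leLW_trans hT h6 h2⟩,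
             SFGI.leRW_trans hT h3 h7, SFGI.leRW_trans hT h8 h4⟩
  let c1 : SFGI.Ctx S :=
    { μ := (· * ·), T := T, assoc := mul_assoc,
      hT := hT,
      r := fun a b => eqvLW T a.1 b.1 ∧ eqvRW T a.1 b.1,
      hre := hre, hfin := hfin,
      hrL := fun a b h => h.1.1, hrR := fun a b h => h.2.1 }
  let c2 : SFGI.Ctx S :=
    { μ := fun x y : S => y * x, T := T,
      assoc := fun a b c => (mul_assoc c b a).symm,
      hT := fun a ha b hb => hT b hb a ha,
      r := fun a b => eqvLW T a.1 b.1 ∧ eqvRW T a.1 b.1,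
      hre := hre, hfin := hfin,
      hrL := fun a b h => h.2.1, hrR := fun a b h => h.1.1 }
  have L13 : LeftStableOn (Set.univ : Set S) Set.univ → LeftStableOn T Set.univ :=
    fun h => c1.gen13 h
  have L23 : LeftStableOn T T → LeftStableOn T Set.univ := fun h => c1.gen23 h
  have L31 : LeftStableOn T Set.univ → LeftStableOn (Set.univ : Set S) Set.univ :=
    fun h => c1.gen31 h
  have L32 : LeftStableOn T Set.univ → LeftStableOn T T :=
    fun h a _ s hs => h a trivial s hs
  have R13 : RightStableOn (Set.univ : Set S) Set.univ → RightStableOn T Set.univ :=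
    fun h => SFGI.rstab_iff.mp (c2.gen13 (SFGI.rstab_iff.mpr h))
  have R23 : RightStableOn T T → RightStableOn T Set.univ :=
    fun h => SFGI.rstab_iff.mp (c2.gen23 (SFGI.rstab_iff.mpr h))
  have R31 : RightStableOn T Set.univ → RightStableOn (Set.univ : Set S) Set.univ :=
    fun h => SFGI.rstab_iff.mp (c2.gen31 (SFGI.rstab_iff.mpr h))
  have R32 : RightStableOn T Set.univ → RightStableOn T T :=
    fun h a _ s hs => h a trivial s hs
  refine ⟨⟨⟨fun h => L32 (L13 h), fun h => L31 (L23 h)⟩, ⟨L23, L32⟩⟩,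
    ⟨⟨fun h => ⟨L32 (L13 h.1), R32 (R13 h.2)⟩,
      fun h => ⟨L31 (L23 h.1), R31 (R23 h.2)⟩⟩,
     ⟨fun h => ⟨L23 h.1, R23 h.2⟩, fun h => ⟨L32 h.1, R32 h.2⟩⟩⟩⟩
end

section
/- Let B be a bi-ideal of a semigroup S. If S is left stable, then the semigroup B is left stable; consequently, if S is stable, then B is stable. -/
private lemma stable_core_left {S : Type*} [Semigroup S]
    (hL : LeftStableOn (Set.univ : Set S) Set.univ)
    {B : Set S} (hBSB : ∀ a ∈ B, ∀ s : S, ∀ b ∈ B, a * s * b ∈ B)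
    {a s z m y : S} (hz : z ∈ B) (hm : m ∈ B)
    (hkey : s * z = m * s) (haz : a = z * a * y)
    (hJ : leJW (Set.univ : Set S) a (s * a)) :
    a = s * a ∨ ∃ w ∈ B, a = w * (s * a) := by
  have hLa : eqvLW (Set.univ : Set S) (s * a) a :=
    hL a (Set.mem_univ a) s (Set.mem_univ s)
      ⟨Or.inr (Or.inl ⟨s, Set.mem_univ s, rfl⟩), hJ⟩
  rcases hLa.2 with h | ⟨u, -, hu⟩
  · exact Or.inl h
  right
  -- hu : a = u * (s * a)
  have hze : z * (a * y) = a := by rw [← mul_assoc]; exact haz.symm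
  have hLe : eqvLW (Set.univ : Set S) (z * (a * y)) (a * y) :=
    hL (a * y) (Set.mem_univ _) z (Set.mem_univ z)
      ⟨Or.inr (Or.inl ⟨z, Set.mem_univ z, rfl⟩),
       Or.inr (Or.inr (Or.inl ⟨y, Set.mem_univ y, by rw [hze]⟩))⟩
  have hB : a * y = a ∨ ∃ lam : S, a * y = lam * a := by
    rcases hLe.2 with h | ⟨lam, -, h⟩
    · rw [hze] at h; exact Or.inl h
    · rw [hze] at h; exact Or.inr ⟨lam, h⟩
  have hmb : m * (s * a) = s * (z * a) := by
    rw [← mul_assoc, ← hkey, mul_assoc]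
  have hbmy : s * a = m * (s * a) * y := by
    rw [hmb, mul_assoc, ← haz]
  have hLb : eqvLW (Set.univ : Set S) (m * (s * a)) (s * a) :=
    hL (s * a) (Set.mem_univ _) m (Set.mem_univ m)
      ⟨Or.inr (Or.inl ⟨m, Set.mem_univ m, rfl⟩),
       Or.inr (Or.inr (Or.inl ⟨y, Set.mem_univ y, hbmy⟩))⟩
  have h1 : ∃ t1 : S, a = z * (t1 * (s * a)) := by
    rcases hB with h | ⟨lam, h⟩
    · refine ⟨u, ?_⟩
      calc a = z * (a * y) := hze.symm
        _ = z * a := by rw [h]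
        _ = z * (u * (s * a)) := by rw [← hu]
    · refine ⟨lam * u, ?_⟩
      calc a = z * (a * y) := hze.symm
        _ = z * (lam * a) := by rw [h]
        _ = z * (lam * (u * (s * a))) := by rw [← hu]
        _ = z * (lam * u * (s * a)) := by rw [mul_assoc lam u]
  obtain ⟨t1, ht1⟩ := h1
  rcases hLb.2 with h2 | ⟨nu, -, h2⟩
  · refine ⟨z * t1 * m, hBSB z hz t1 m hm, ?_⟩
    calc a = z * (t1 * (s * a)) := ht1
      _ = z * (t1 * (m * (s * a))) := by rw [← h2]
      _ = z * (t1 * m * (s * a)) := by rw [mul_assoc t1 m]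
      _ = z * (t1 * m) * (s * a) := by rw [mul_assoc z (t1 * m)]
      _ = z * t1 * m * (s * a) := by rw [mul_assoc z t1 m]
  · refine ⟨z * (t1 * nu) * m, hBSB z hz (t1 * nu) m hm, ?_⟩
    calc a = z * (t1 * (s * a)) := ht1
      _ = z * (t1 * (nu * (m * (s * a)))) := by rw [← h2]
      _ = z * (t1 * nu * (m * (s * a))) := by rw [mul_assoc t1 nu]
      _ = z * (t1 * nu * m * (s * a)) := by rw [mul_assoc (t1 * nu) m]
      _ = z * (t1 * nu * m) * (s * a) := by rw [mul_assoc z (t1 * nu * m)]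
      _ = z * (t1 * nu) * m * (s * a) := by rw [mul_assoc z (t1 * nu) m]

private lemma stable_core_right {S : Type*} [Semigroup S]
    (hR : RightStableOn (Set.univ : Set S) Set.univ)
    {B : Set S} (hBSB : ∀ a ∈ B, ∀ s : S, ∀ b ∈ B, a * s * b ∈ B)
    {a t z m x : S} (hz : z ∈ B) (hm : m ∈ B)
    (hkey : z * t = t * m) (haz : a = x * (a * z))
    (hJ : leJW (Set.univ : Set S) a (a * t)) :
    a = a * t ∨ ∃ w ∈ B, a = (a * t) * w := by
  have hRa : eqvRW (Set.univ : Set S) (a * t) a :=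
    hR a (Set.mem_univ a) t (Set.mem_univ t)
      ⟨Or.inr (Or.inr (Or.inl ⟨t, Set.mem_univ t, rfl⟩)), hJ⟩
  rcases hRa.2 with h | ⟨u, -, hu⟩
  · exact Or.inl h
  right
  -- hu : a = (a * t) * u
  have hze : (x * a) * z = a := by rw [mul_assoc]; exact haz.symm
  have hRe : eqvRW (Set.univ : Set S) ((x * a) * z) (x * a) :=
    hR (x * a) (Set.mem_univ _) z (Set.mem_univ z)
      ⟨Or.inr (Or.inr (Or.inl ⟨z, Set.mem_univ z, rfl⟩)),
       Or.inr (Or.inl ⟨x, Set.mem_univ x, by rw [hze]⟩)⟩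
  have hB : x * a = a ∨ ∃ lam : S, x * a = a * lam := by
    rcases hRe.2 with h | ⟨lam, -, h⟩
    · rw [hze] at h; exact Or.inl h
    · rw [hze] at h; exact Or.inr ⟨lam, h⟩
  have hbm : (a * t) * m = (a * z) * t := by
    rw [mul_assoc, ← hkey, ← mul_assoc]
  have hbxm : a * t = x * ((a * t) * m) := by
    rw [hbm, ← mul_assoc, ← haz]
  have hRb : eqvRW (Set.univ : Set S) ((a * t) * m) (a * t) :=
    hR (a * t) (Set.mem_univ _) m (Set.mem_univ m)
      ⟨Or.inr (Or.inr (Or.inl ⟨m, Set.mem_univ m, rfl⟩)),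
       Or.inr (Or.inl ⟨x, Set.mem_univ x, hbxm⟩)⟩
  have h1 : ∃ t1 : S, a = ((a * t) * t1) * z := by
    rcases hB with h | ⟨lam, h⟩
    · refine ⟨u, ?_⟩
      calc a = (x * a) * z := hze.symm
        _ = a * z := by rw [h]
        _ = ((a * t) * u) * z := by rw [← hu]
    · refine ⟨u * lam, ?_⟩
      calc a = (x * a) * z := hze.symm
        _ = (a * lam) * z := by rw [h]
        _ = ((a * t) * u * lam) * z := by rw [← hu]
        _ = ((a * t) * (u * lam)) * z := by rw [mul_assoc (a * t) u lam]
  obtain ⟨t1, ht1⟩ := h1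
  rcases hRb.2 with h2 | ⟨nu, -, h2⟩
  · refine ⟨m * t1 * z, hBSB m hm t1 z hz, ?_⟩
    calc a = ((a * t) * t1) * z := ht1
      _ = (((a * t) * m) * t1) * z := by rw [← h2]
      _ = ((a * t) * (m * t1)) * z := by rw [mul_assoc (a * t) m t1]
      _ = (a * t) * ((m * t1) * z) := by rw [mul_assoc (a * t) (m * t1) z]
  · refine ⟨m * (nu * t1) * z, hBSB m hm (nu * t1) z hz, ?_⟩
    calc a = ((a * t) * t1) * z := ht1
      _ = ((((a * t) * m) * nu) * t1) * z := by rw [← h2]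
      _ = (((a * t) * m) * (nu * t1)) * z := by rw [mul_assoc ((a * t) * m) nu t1]
      _ = ((a * t) * (m * (nu * t1))) * z := by rw [mul_assoc (a * t) m (nu * t1)]
      _ = (a * t) * ((m * (nu * t1)) * z) := by rw [mul_assoc (a * t) (m * (nu * t1)) z]

private lemma leftStableOn_of_biIdeal {S : Type*} [Semigroup S]
    {B : Set S}
    (hBB : ∀ a ∈ B, ∀ b ∈ B, a * b ∈ B)
    (hBSB : ∀ a ∈ B, ∀ s : S, ∀ b ∈ B, a * s * b ∈ B)
    (hL : LeftStableOn (Set.univ : Set S) Set.univ) :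
    LeftStableOn B B := by
  intro a ha s hs hJB
  refine ⟨Or.inr ⟨s, hs, rfl⟩, ?_⟩
  rcases hJB.2 with h | ⟨x, hx, h⟩ | ⟨y, hy, h⟩ | ⟨x, hx, y, hy, h⟩
  · exact Or.inl h
  · exact Or.inr ⟨x, hx, h⟩
  · -- h : a = (s * a) * y
    have haz : a = s * a * y := h
    have := stable_core_left hL hBSB hs hs (rfl : s * s = s * s) haz
      (Or.inr (Or.inr (Or.inl ⟨y, Set.mem_univ y, h⟩)))
    rcases this with h' | ⟨w, hw, h'⟩
    · exact Or.inl h'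
    · exact Or.inr ⟨w, hw, h'⟩
  · -- h : a = x * (s * a) * y
    have haz : a = (x * s) * a * y := by rw [mul_assoc x s a]; exact h
    have hkey : s * (x * s) = (s * x) * s := (mul_assoc s x s).symm
    have := stable_core_left hL hBSB (hBB x hx s hs) (hBB s hs x hx) hkey haz
      (Or.inr (Or.inr (Or.inr ⟨x, Set.mem_univ x, y, Set.mem_univ y, h⟩)))
    rcases this with h' | ⟨w, hw, h'⟩
    · exact Or.inl h'
    · exact Or.inr ⟨w, hw, h'⟩

private lemma rightStableOn_of_biIdeal {S : Type*} [Semigroup S]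
    {B : Set S}
    (hBB : ∀ a ∈ B, ∀ b ∈ B, a * b ∈ B)
    (hBSB : ∀ a ∈ B, ∀ s : S, ∀ b ∈ B, a * s * b ∈ B)
    (hR : RightStableOn (Set.univ : Set S) Set.univ) :
    RightStableOn B B := by
  intro a ha t ht hJB
  refine ⟨Or.inr ⟨t, ht, rfl⟩, ?_⟩
  rcases hJB.2 with h | ⟨x, hx, h⟩ | ⟨y, hy, h⟩ | ⟨x, hx, y, hy, h⟩
  · exact Or.inl h
  · -- h : a = x * (a * t)
    have := stable_core_right hR hBSB ht ht (rfl : t * t = t * t) h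
      (Or.inr (Or.inl ⟨x, Set.mem_univ x, h⟩))
    rcases this with h' | ⟨w, hw, h'⟩
    · exact Or.inl h'
    · exact Or.inr ⟨w, hw, h'⟩
  · exact Or.inr ⟨y, hy, h⟩
  · -- h : a = x * (a * t) * y
    have haz : a = x * (a * (t * y)) := by
      rw [← mul_assoc a t y, ← mul_assoc x (a * t) y]; exact h
    have hkey : (t * y) * t = t * (y * t) := mul_assoc t y t
    have := stable_core_right hR hBSB (hBB t ht y hy) (hBB y hy t ht) hkey haz
      (Or.inr (Or.inr (Or.inr ⟨x, Set.mem_univ x, y, Set.mem_univ y, h⟩)))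
    rcases this with h' | ⟨w, hw, h'⟩
    · exact Or.inl h'
    · exact Or.inr ⟨w, hw, h'⟩

/-- If a semigroup `S` is left stable, then so is any bi-ideal `B` of `S`;
consequently, if `S` is stable then `B` is stable. -/
theorem leftStable_biIdeal {S : Type*} [Semigroup S]
    (B : Set S) (hB0 : B.Nonempty)
    (hBB : ∀ a ∈ B, ∀ b ∈ B, a * b ∈ B)
    (hBSB : ∀ a ∈ B, ∀ s : S, ∀ b ∈ B, a * s * b ∈ B) :
    (LeftStableOn (Set.univ : Set S) Set.univ → LeftStableOn B B) ∧
    (StableOn (Set.univ : Set S) Set.univ → StableOn B B) := by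
  refine ⟨leftStableOn_of_biIdeal hBB hBSB, fun hS => ?_⟩
  exact ⟨leftStableOn_of_biIdeal hBB hBSB hS.1, rightStableOn_of_biIdeal hBB hBSB hS.2⟩
end
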